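/- Let n ≥ 1 be an integer, 1 ≤ p < ∞ and 0 ≤ β < n. If f belongs to the vanishing-at-origin subspace L^{p,β}_0(ℝⁿ) and g ∈ L¹(ℝⁿ), then the convolution f ∗ g is defined almost everywhere and belongs to L^{p,β}_0(ℝⁿ); i.e. L^{p,β}_0 is invariant under convolution with integrable functions. -/

import Mathlib

open MeasureTheory Metric ENNReal Filter

noncomputable def morreyA (n : ℕ) (p β : ℝ)
    (f : EuclideanSpace ℝ (Fin n) → ℂ)
    (y : EuclideanSpace ℝ (Fin n)) (r : ℝ) : ℝ≥0∞ :=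
  ENNReal.ofReal (r ^ (-β)) * ∫⁻ x in ball y r, (‖f x‖₊ : ℝ≥0∞) ^ p

/-- The (global) Morrey norm `‖f‖_{L^{p,β}}`. -/
noncomputable def morreyNorm (n : ℕ) (p β : ℝ)
    (f : EuclideanSpace ℝ (Fin n) → ℂ) : ℝ≥0∞ :=
  ⨆ (y : EuclideanSpace ℝ (Fin n)) (r : ℝ) (_ : 0 < r),
    (morreyA n p β f y r) ^ (1 / p)

/-- Membership in the vanishing-at-origin subspace `L^{p,β}_0`. -/
def vanishAtOrigin (n : ℕ) (p β : ℝ) (f : EuclideanSpace ℝ (Fin n) → ℂ) : Prop :=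
  Tendsto
    (fun t : ℝ => ⨆ (y : EuclideanSpace ℝ (Fin n)) (r : ℝ) (_ : 0 < r) (_ : r ≤ t),
      morreyA n p β f y r)
    (nhdsWithin 0 (Set.Ioi 0)) (nhds 0)

/-- Membership in the vanishing-at-infinity subspace `L^{p,β}_∞`. -/
def vanishAtInfinity (n : ℕ) (p β : ℝ) (f : EuclideanSpace ℝ (Fin n) → ℂ) : Prop :=
  Tendsto
    (fun t : ℝ => ⨆ (y : EuclideanSpace ℝ (Fin n)) (r : ℝ) (_ : t ≤ r),
      morreyA n p β f y r)
    atTop (nhds 0)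

/-- Membership in the truncation subspace `L^{p,β}_*`. -/
def vanishTrunc (n : ℕ) (p β : ℝ) (f : EuclideanSpace ℝ (Fin n) → ℂ) : Prop :=
  Tendsto
    (fun N : ℝ => ⨆ (y : EuclideanSpace ℝ (Fin n)) (r : ℝ) (_ : 0 < r),
      ENNReal.ofReal (r ^ (-β)) *
        ∫⁻ x in ball y r ∩ {x : EuclideanSpace ℝ (Fin n) | N < ‖x‖},
          (‖f x‖₊ : ℝ≥0∞) ^ p)
    atTop (nhds 0)

/-!
With `I = ∫ ‖g‖`, Hölder's inequality for the weight `‖g‖` gives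
`‖(f ∗ g) x‖^p ≤ I^(p-1) ∫ ‖f (x - z)‖^p ‖g z‖ dz`. Integrating over `B(y, r)` and exchanging the
integrals, each translate of `f` contributes at most `sup_{y'} ∫_{B(y', r)} ‖f‖^p`, hence
`r^(-β) ∫_{B(y,r)} ‖f ∗ g‖^p ≤ I^p sup_{y'} r^(-β) ∫_{B(y',r)} ‖f‖^p` radius by radius; this gives
both the Morrey bound and the vanishing as `r → 0`. The same exchange with `‖f‖` in place of
`‖f‖^p` shows that `x ↦ ∫ ‖f (x - z)‖ ‖g z‖ dz` is integrable on every ball, hence finite a.e.,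
because `a ≤ 1 + a^p` bounds the integrals of `‖f‖` over balls of a fixed radius uniformly.
-/

namespace ENNReal

theorem le_one_add_rpow (a : ℝ≥0∞) {p : ℝ} (hp : 1 ≤ p) : a ≤ 1 + a ^ p := by
  rcases le_total a 1 with h | h
  · exact h.trans le_self_add
  · calc a = a ^ (1 : ℝ) := (rpow_one a).symm
      _ ≤ a ^ p := rpow_le_rpow_of_exponent_le h hp
      _ ≤ 1 + a ^ p := le_add_self

variable {α : Type*} [MeasurableSpace α] {μ : Measure α}

theorem lintegral_mul_rpow_le {u w : α → ℝ≥0∞} (hu : AEMeasurable u μ) (hw : AEMeasurable w μ)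
    {p : ℝ} (hp : 1 ≤ p) :
    (∫⁻ a, u a * w a ∂μ) ^ p ≤ (∫⁻ a, w a ∂μ) ^ (p - 1) * ∫⁻ a, u a ^ p * w a ∂μ := by
  have hp0 : 0 < p := zero_lt_one.trans_le hp
  have hsplit : ∀ a, (u a ^ p * w a) ^ p⁻¹ * w a ^ (1 - p⁻¹) = u a * w a := fun a => by
    rw [mul_rpow_of_nonneg _ _ (inv_nonneg.2 hp0.le), rpow_rpow_inv hp0.ne', mul_assoc,
      ← rpow_add_of_nonneg _ _ (inv_nonneg.2 hp0.le) (sub_nonneg.2 (inv_le_one_of_one_le₀ hp)),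
      add_sub_cancel, rpow_one]
  have holder := lintegral_mul_norm_pow_le (f := fun a => u a ^ p * w a)
    ((hu.pow_const p).mul hw) hw (inv_nonneg.2 hp0.le) (sub_nonneg.2 (inv_le_one_of_one_le₀ hp))
    (add_sub_cancel _ _)
  simp only [hsplit] at holder
  calc (∫⁻ a, u a * w a ∂μ) ^ p
      ≤ ((∫⁻ a, u a ^ p * w a ∂μ) ^ p⁻¹ * (∫⁻ a, w a ∂μ) ^ (1 - p⁻¹)) ^ p :=
        rpow_le_rpow holder hp0.le
    _ = (∫⁻ a, w a ∂μ) ^ (p - 1) * ∫⁻ a, u a ^ p * w a ∂μ := by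
        rw [mul_rpow_of_nonneg _ _ hp0.le, rpow_inv_rpow hp0.ne', ← rpow_mul, sub_mul,
          inv_mul_cancel₀ hp0.ne', one_mul, mul_comm]

end ENNReal

section ConvolutionLIntegral

variable {G : Type*} [MeasurableSpace G] [Sub G] [MeasurableSub₂ G] {h w : G → ℝ≥0∞}

theorem measurable_uncurry_comp_sub_mul (hh : Measurable h) (hw : Measurable w) :
    Measurable (Function.uncurry fun x z : G => h (x - z) * w z) :=
  (hh.comp (measurable_fst.sub measurable_snd)).mul (hw.comp measurable_snd)

theorem measurable_lintegral_comp_sub_mul {μ : Measure G} [SFinite μ] (hh : Measurable h)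
    (hw : Measurable w) : Measurable fun x => ∫⁻ z, h (x - z) * w z ∂μ :=
  (measurable_uncurry_comp_sub_mul hh hw).lintegral_prod_right'

end ConvolutionLIntegral

theorem nnnorm_integral_mul_rpow_le {α 𝕜 : Type*} [MeasurableSpace α] {μ : Measure α} [RCLike 𝕜]
    {F G : α → 𝕜} (hF : AEMeasurable F μ) (hG : AEMeasurable G μ) {p : ℝ} (hp : 1 ≤ p) :
    (‖∫ a, F a * G a ∂μ‖₊ : ℝ≥0∞) ^ p ≤
      (∫⁻ a, ‖G a‖₊ ∂μ) ^ (p - 1) * ∫⁻ a, (‖F a‖₊ : ℝ≥0∞) ^ p * ‖G a‖₊ ∂μ := by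
  have hnorm : (‖∫ a, F a * G a ∂μ‖₊ : ℝ≥0∞) ≤ ∫⁻ a, (‖F a‖₊ : ℝ≥0∞) * ‖G a‖₊ ∂μ := by
    simpa only [enorm_eq_nnnorm, nnnorm_mul, ENNReal.coe_mul] using
      enorm_integral_le_lintegral_enorm (μ := μ) (fun a => F a * G a)
  exact (ENNReal.rpow_le_rpow hnorm (zero_le_one.trans hp)).trans
    (ENNReal.lintegral_mul_rpow_le (by fun_prop) (by fun_prop) hp)

section Ball

variable {E : Type*} [SeminormedAddCommGroup E] [MeasurableSpace E] [MeasurableAdd E]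
  {μ : Measure E} [μ.IsAddRightInvariant]

theorem setLIntegral_ball_comp_sub_right (h : E → ℝ≥0∞) (y z : E) (r : ℝ) :
    ∫⁻ x in ball y r, h (x - z) ∂μ = ∫⁻ x in ball (y - z) r, h x ∂μ := by
  have hpre : (· - z) ⁻¹' ball (y - z) r = ball y r := by
    ext x
    simp only [Set.mem_preimage, mem_ball, dist_sub_right]
  rw [← hpre]
  exact (measurePreserving_sub_right μ z).setLIntegral_comp_preimage_emb
    (MeasurableEquiv.subRight z).measurableEmbedding h _

theorem setLIntegral_ball_lintegral_comp_sub_mul_le [MeasurableSub₂ E] [SFinite μ]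
    {h w : E → ℝ≥0∞} (hh : Measurable h) (hw : Measurable w) (y : E) (r : ℝ) :
    ∫⁻ x in ball y r, ∫⁻ z, h (x - z) * w z ∂μ ∂μ ≤
      (⨆ y', ∫⁻ x in ball y' r, h x ∂μ) * ∫⁻ z, w z ∂μ := by
  calc ∫⁻ x in ball y r, ∫⁻ z, h (x - z) * w z ∂μ ∂μ
      = ∫⁻ z, (∫⁻ x in ball (y - z) r, h x ∂μ) * w z ∂μ := by
        rw [lintegral_lintegral_swap (measurable_uncurry_comp_sub_mul hh hw).aemeasurable]
        refine lintegral_congr fun z => ?_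
        rw [lintegral_mul_const _ (by fun_prop), setLIntegral_ball_comp_sub_right]
    _ ≤ ∫⁻ z, (⨆ y', ∫⁻ x in ball y' r, h x ∂μ) * w z ∂μ :=
        lintegral_mono fun z => by
          gcongr
          exact le_iSup (fun y' => ∫⁻ x in ball y' r, h x ∂μ) (y - z)
    _ = (⨆ y', ∫⁻ x in ball y' r, h x ∂μ) * ∫⁻ z, w z ∂μ := lintegral_const_mul _ hw

theorem setLIntegral_ball_convolution_rpow_le [MeasurableSub₂ E] [SFinite μ] {𝕜 : Type*}
    [RCLike 𝕜] {f g : E → 𝕜} {p : ℝ} (hp : 1 ≤ p) (hf : Measurable f) (hg : Measurable g)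
    (y : E) (r : ℝ) :
    ∫⁻ x in ball y r, (‖∫ z, f (x - z) * g z ∂μ‖₊ : ℝ≥0∞) ^ p ∂μ ≤
      (∫⁻ z, ‖g z‖₊ ∂μ) ^ p * ⨆ y', ∫⁻ x in ball y' r, (‖f x‖₊ : ℝ≥0∞) ^ p ∂μ := by
  set I := ∫⁻ z, (‖g z‖₊ : ℝ≥0∞) ∂μ
  have hfp : Measurable fun x => (‖f x‖₊ : ℝ≥0∞) ^ p := by fun_prop
  have hI : I ^ (p - 1) * I = I ^ p := by
    conv_rhs => rw [← sub_add_cancel p 1,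
      ENNReal.rpow_add_of_nonneg _ _ (sub_nonneg.2 hp) zero_le_one, ENNReal.rpow_one]
  calc ∫⁻ x in ball y r, (‖∫ z, f (x - z) * g z ∂μ‖₊ : ℝ≥0∞) ^ p ∂μ
      ≤ ∫⁻ x in ball y r, I ^ (p - 1) * ∫⁻ z, (‖f (x - z)‖₊ : ℝ≥0∞) ^ p * ‖g z‖₊ ∂μ ∂μ :=
        lintegral_mono fun x => nnnorm_integral_mul_rpow_le (by fun_prop) hg.aemeasurable hp
    _ = I ^ (p - 1) * ∫⁻ x in ball y r, ∫⁻ z, (‖f (x - z)‖₊ : ℝ≥0∞) ^ p * ‖g z‖₊ ∂μ ∂μ :=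
        lintegral_const_mul _ (measurable_lintegral_comp_sub_mul hfp (by fun_prop))
    _ ≤ I ^ (p - 1) * ((⨆ y', ∫⁻ x in ball y' r, (‖f x‖₊ : ℝ≥0∞) ^ p ∂μ) * I) := by
        gcongr
        exact setLIntegral_ball_lintegral_comp_sub_mul_le hfp (by fun_prop) y r
    _ = I ^ p * ⨆ y', ∫⁻ x in ball y' r, (‖f x‖₊ : ℝ≥0∞) ^ p ∂μ := by
        rw [← hI]
        ring

end Ball

section Morrey

variable {n : ℕ} {p β r : ℝ} {f g : EuclideanSpace ℝ (Fin n) → ℂ}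

theorem morreyA_le_morreyNorm_rpow (hp : 0 < p) (y : EuclideanSpace ℝ (Fin n)) (hr : 0 < r) :
    morreyA n p β f y r ≤ morreyNorm n p β f ^ p := by
  rw [← ENNReal.rpow_inv_le_iff hp, inv_eq_one_div]
  exact le_iSup₂_of_le y r (le_iSup_of_le hr le_rfl)

theorem setLIntegral_ball_rpow_eq_ofReal_mul_morreyA (y : EuclideanSpace ℝ (Fin n)) (hr : 0 < r) :
    ∫⁻ x in ball y r, (‖f x‖₊ : ℝ≥0∞) ^ p = ENNReal.ofReal (r ^ β) * morreyA n p β f y r := by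
  rw [morreyA, ← mul_assoc, ← ENNReal.ofReal_mul (Real.rpow_nonneg hr.le β), ← Real.rpow_add hr,
    add_neg_cancel, Real.rpow_zero, ENNReal.ofReal_one, one_mul]

theorem iSup_setLIntegral_ball_rpow_ne_top (hp : 0 < p) (hf : morreyNorm n p β f < ⊤)
    (hr : 0 < r) : ⨆ y, ∫⁻ x in ball y r, (‖f x‖₊ : ℝ≥0∞) ^ p ≠ ⊤ := by
  refine ne_top_of_le_ne_top
    (ENNReal.mul_ne_top (ENNReal.ofReal_ne_top (r := r ^ β))
      (ENNReal.rpow_ne_top_of_nonneg hp.le hf.ne))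
    (iSup_le fun y => ?_)
  rw [setLIntegral_ball_rpow_eq_ofReal_mul_morreyA y hr]
  gcongr
  exact morreyA_le_morreyNorm_rpow hp y hr

theorem iSup_setLIntegral_ball_ne_top (hp : 1 ≤ p) (hf : morreyNorm n p β f < ⊤) (hr : 0 < r) :
    ⨆ y, ∫⁻ x in ball y r, (‖f x‖₊ : ℝ≥0∞) ≠ ⊤ := by
  refine ne_top_of_le_ne_top (ENNReal.add_ne_top.2 ⟨(measure_ball_lt_top (μ := volume)
    (x := (0 : EuclideanSpace ℝ (Fin n))) (r := r)).ne,
    iSup_setLIntegral_ball_rpow_ne_top (zero_lt_one.trans_le hp) hf hr⟩) (iSup_le fun y => ?_)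
  calc ∫⁻ x in ball y r, (‖f x‖₊ : ℝ≥0∞)
      ≤ ∫⁻ x in ball y r, (1 + (‖f x‖₊ : ℝ≥0∞) ^ p) :=
        lintegral_mono fun x => ENNReal.le_one_add_rpow _ hp
    _ = volume (ball y r) + ∫⁻ x in ball y r, (‖f x‖₊ : ℝ≥0∞) ^ p := by
        rw [lintegral_add_left measurable_const, setLIntegral_one]
    _ ≤ volume (ball (0 : EuclideanSpace ℝ (Fin n)) r) +
          ⨆ y', ∫⁻ x in ball y' r, (‖f x‖₊ : ℝ≥0∞) ^ p := by
        rw [Measure.addHaar_ball_center]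
        exact add_le_add_right
          (le_iSup (fun y' => ∫⁻ x in ball y' r, (‖f x‖₊ : ℝ≥0∞) ^ p) y) _

theorem morreyA_convolution_le (hp : 1 ≤ p) (hf : Measurable f) (hg : Measurable g)
    (y : EuclideanSpace ℝ (Fin n)) (r : ℝ) :
    morreyA n p β (fun x => ∫ z, f (x - z) * g z) y r ≤
      (∫⁻ z, ‖g z‖₊) ^ p * ⨆ y', morreyA n p β f y' r := by
  calc morreyA n p β (fun x => ∫ z, f (x - z) * g z) y r
      ≤ ENNReal.ofReal (r ^ (-β)) *
          ((∫⁻ z, ‖g z‖₊) ^ p * ⨆ y', ∫⁻ x in ball y' r, (‖f x‖₊ : ℝ≥0∞) ^ p) :=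
        mul_le_mul_right (setLIntegral_ball_convolution_rpow_le hp hf hg y r) _
    _ = (∫⁻ z, ‖g z‖₊) ^ p * ⨆ y', morreyA n p β f y' r := by
        rw [mul_left_comm, ENNReal.mul_iSup]
        rfl

theorem morreyNorm_convolution_lt_top (hp : 1 ≤ p) (hf : Measurable f)
    (hfM : morreyNorm n p β f < ⊤) (hg : Measurable g) (hgi : Integrable g) :
    morreyNorm n p β (fun x => ∫ z, f (x - z) * g z) < ⊤ := by
  have hp0 : 0 < p := zero_lt_one.trans_le hp
  have hbound : morreyNorm n p β (fun x => ∫ z, f (x - z) * g z) ≤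
      ((∫⁻ z, ‖g z‖₊) ^ p * morreyNorm n p β f ^ p) ^ (1 / p) :=
    iSup₂_le fun y r => iSup_le fun hr => ENNReal.rpow_le_rpow
      ((morreyA_convolution_le hp hf hg y r).trans (mul_le_mul_right
        (iSup_le fun y' => morreyA_le_morreyNorm_rpow hp0 y' hr) _)) (by positivity)
  refine hbound.trans_lt
    (ENNReal.rpow_lt_top_of_nonneg (by positivity) (ENNReal.mul_ne_top ?_ ?_))
  · exact ENNReal.rpow_ne_top_of_nonneg hp0.le hgi.2.ne
  · exact ENNReal.rpow_ne_top_of_nonneg hp0.le hfM.ne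

theorem vanishAtOrigin_convolution (hp : 1 ≤ p) (hf : Measurable f)
    (hf0 : vanishAtOrigin n p β f) (hg : Measurable g) (hgi : Integrable g) :
    vanishAtOrigin n p β (fun x => ∫ z, f (x - z) * g z) := by
  have hC : (∫⁻ z, ‖g z‖₊) ^ p ≠ ⊤ :=
    ENNReal.rpow_ne_top_of_nonneg (zero_le_one.trans hp) hgi.2.ne
  have hlim := ENNReal.Tendsto.const_mul hf0 (Or.inr hC)
  rw [mul_zero] at hlim
  refine tendsto_of_tendsto_of_tendsto_of_le_of_le tendsto_const_nhds hlim (fun _ => zero_le)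
    fun t => iSup₂_le fun y r => iSup₂_le fun hr hrt => ?_
  refine (morreyA_convolution_le hp hf hg y r).trans (mul_le_mul_right
    (iSup_le fun y' => le_iSup₂_of_le y' r ?_) _)
  exact le_iSup₂_of_le hr hrt le_rfl

theorem ae_integrable_convolution (hp : 1 ≤ p) (hf : Measurable f)
    (hfM : morreyNorm n p β f < ⊤) (hg : Measurable g) (hgi : Integrable g) :
    ∀ᵐ x, Integrable (fun z => f (x - z) * g z) := by
  have hfn : Measurable fun x => (‖f x‖₊ : ℝ≥0∞) := by fun_prop
  have hgn : Measurable fun z => (‖g z‖₊ : ℝ≥0∞) := by fun_prop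
  have hfin : ∀ m : ℕ, ∀ᵐ x ∂volume.restrict (ball 0 (m + 1)),
      ∫⁻ z, (‖f (x - z)‖₊ : ℝ≥0∞) * ‖g z‖₊ < ⊤ := fun m =>
    ae_lt_top (measurable_lintegral_comp_sub_mul hfn hgn) (ne_top_of_le_ne_top
      (ENNReal.mul_ne_top (iSup_setLIntegral_ball_ne_top hp hfM (by positivity)) hgi.2.ne)
      (setLIntegral_ball_lintegral_comp_sub_mul_le hfn hgn 0 _))
  have hae := (ae_restrict_iUnion_iff _ _).2 hfin
  rw [iUnion_ball_nat_succ, Measure.restrict_univ] at hae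
  refine hae.mono fun x hx => ⟨by fun_prop, ?_⟩
  simpa only [HasFiniteIntegral, enorm_eq_nnnorm, nnnorm_mul, ENNReal.coe_mul] using hx

end Morrey

theorem vanishAtOrigin_convolution_invariant_general (n : ℕ) (p β : ℝ)
    (hp : 1 ≤ p)
    (f g : EuclideanSpace ℝ (Fin n) → ℂ) (hf : Measurable f)
    (hfM : morreyNorm n p β f < ⊤) (hf0 : vanishAtOrigin n p β f)
    (hg : Integrable g) :
    (∀ᵐ x : EuclideanSpace ℝ (Fin n), Integrable (fun z => f (x - z) * g z)) ∧
    morreyNorm n p β (fun x => ∫ z, f (x - z) * g z) < ⊤ ∧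
    vanishAtOrigin n p β (fun x => ∫ z, f (x - z) * g z) := by
  obtain ⟨g', hg'm, hgg'⟩ : ∃ g', Measurable g' ∧ g =ᵐ[volume] g' :=
    ⟨_, hg.aemeasurable.measurable_mk, hg.aemeasurable.ae_eq_mk⟩
  have hg' : Integrable g' := hg.congr hgg'
  have hconv : (fun x => ∫ z, f (x - z) * g z) = fun x => ∫ z, f (x - z) * g' z :=
    funext fun x => integral_congr_ae (EventuallyEq.rfl.mul hgg')
  rw [hconv]
  refine ⟨?_, morreyNorm_convolution_lt_top hp hf hfM hg'm hg',
    vanishAtOrigin_convolution hp hf hf0 hg'm hg'⟩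
  filter_upwards [ae_integrable_convolution hp hf hfM hg'm hg'] with x hx
  exact hx.congr (EventuallyEq.rfl.mul hgg'.symm)

/-- `L^{p,β}_0` is invariant under convolution with integrable functions: if `f ∈ L^{p,β}_0`
and `g ∈ L¹`, then `f ∗ g` is defined a.e. and belongs to `L^{p,β}_0`. -/
theorem vanishAtOrigin_convolution_invariant (n : ℕ) (hn : 1 ≤ n) (p β : ℝ)
    (hp : 1 ≤ p) (hβ : 0 ≤ β) (hβn : β < n)
    (f g : EuclideanSpace ℝ (Fin n) → ℂ) (hf : Measurable f)
    (hfM : morreyNorm n p β f < ⊤) (hf0 : vanishAtOrigin n p β f)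
    (hg : Integrable g) :
    (∀ᵐ x : EuclideanSpace ℝ (Fin n), Integrable (fun z => f (x - z) * g z)) ∧
    morreyNorm n p β (fun x => ∫ z, f (x - z) * g z) < ⊤ ∧
    vanishAtOrigin n p β (fun x => ∫ z, f (x - z) * g z) :=
  vanishAtOrigin_convolution_invariant_general n p β hp f g hf hfM hf0 hg
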